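/- Let D be a bounded domain in ℂⁿ and {f_j} a sequence of holomorphic self-maps of D such that there is a constant c < 1 with k_D(f_j(z), f_j(w)) ≤ c·k_D(z, w) for all z, w ∈ D and all j, where k_D is the Kobayashi distance. Then every limit in the compact-open topology of the iterated function system F_j := f_j ∘ ⋯ ∘ f_1 is a constant map. -/

import Mathlib

open Metric Set Filter
open scoped ENNReal NNReal

noncomputable section

/-- The open unit disc in `ℂ`. -/
def uDisc : Set ℂ := Metric.ball 0 1

/-- The inverse hyperbolic tangent. -/
def artanh (x : ℝ) : ℝ := Real.log ((1 + x) / (1 - x)) / 2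

/-- The Poincaré (hyperbolic) distance on the unit disc. -/
def pDist (ζ η : ℂ) : ℝ :=
  artanh ‖(ζ - η) / (1 - (starRingEnd ℂ) ζ * η)‖

/-- Hyperbolic ball in the unit disc. -/
def hBall (z : ℂ) (r : ℝ) : Set ℂ := {w ∈ uDisc | pDist w z < r}

/-- Bloch radius of a subset of the unit disc. -/
def blochRadiusD (U : Set ℂ) : ℝ≥0∞ :=
  ⨆ (r : NNReal) (_ : ∃ z ∈ uDisc, hBall z (r : ℝ) ⊆ U), (r : ℝ≥0∞)

/-- `tanh` extended to `ℝ≥0∞`, with `tanh ∞ = 1`. -/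
def tanhE (x : ℝ≥0∞) : ℝ := if x = ⊤ then 1 else Real.tanh x.toReal

variable {E : Type*} [NormedAddCommGroup E] [NormedSpace ℂ E]

/-- Admissible values for the Lempert function of `D` between `z` and `w`. -/
def lemSet (D : Set E) (z w : E) : Set ℝ :=
  {c | ∃ (f : ℂ → E) (ζ : ℂ), DifferentiableOn ℂ f uDisc ∧ MapsTo f uDisc D ∧
    f 0 = z ∧ ζ ∈ uDisc ∧ f ζ = w ∧ c = pDist 0 ζ}

/-- The Kobayashi (pseudo)distance of `D`, defined via chains of analytic discs. -/
def kDist (D : Set E) (z w : E) : ℝ :=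
  sInf {s | ∃ (m : ℕ) (p : ℕ → E), p 0 = z ∧ p m = w ∧ (∀ i, i ≤ m → p i ∈ D) ∧
      s = ∑ i ∈ Finset.range m, sInf (lemSet D (p i) (p (i + 1)))}

/-- Kobayashi ball of center `z` and radius `r` in `D`. -/
def kBall (D : Set E) (z : E) (r : ℝ) : Set E := {w ∈ D | kDist D w z < r}

/-- Bloch radius of `X ⊆ D` with respect to the Kobayashi distance of `D`. -/
def blochRadius (D X : Set E) : ℝ≥0∞ :=
  ⨆ (r : NNReal) (_ : ∃ z ∈ D, kBall D z (r : ℝ) ⊆ X), (r : ℝ≥0∞)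

/-- The Kobayashi infinitesimal (pseudo)metric of `D`. -/
def kMetric (D : Set E) (z v : E) : ℝ :=
  sInf {c | ∃ (f : ℂ → E) (r : ℝ), DifferentiableOn ℂ f uDisc ∧ MapsTo f uDisc D ∧
    f 0 = z ∧ 0 < r ∧ deriv f 0 = r • v ∧ c = 1 / r}

/-- The hyperbolic Lipschitz constant `μ_D(X)` of `X` inside `D`. -/
def lipConst (D X : Set E) : ℝ :=
  sSup {t | ∃ z ∈ X, ∃ v : E, v ≠ 0 ∧ t = kMetric D z v / kMetric X z v}

/-- `comps f j = f j ∘ ⋯ ∘ f 0`, the iterated function system associated to `f`. -/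
def comps (f : ℕ → E → E) : ℕ → E → E
  | 0 => f 0
  | (j + 1) => f (j + 1) ∘ comps f j

/-- `F` is a limit, in the compact-open topology on `D`, of a subsequence of the
iterated function system associated to `f`. -/
def IFSLimit (D : Set E) (f : ℕ → E → E) (F : E → E) : Prop :=
  ∃ s : ℕ → ℕ, StrictMono s ∧
    TendstoLocallyUniformlyOn (fun j => comps f (s j)) F atTop D

/-- `X ⊆ D` is degenerate in `D`: every limit of every iterated function system of
holomorphic self-maps of `D` with image in `X` is constant. -/
def Degenerate (D X : Set E) : Prop :=
  ∀ f : ℕ → E → E, (∀ j, DifferentiableOn ℂ (f j) D ∧ MapsTo (f j) D X) →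
    ∀ F : E → E, IFSLimit D f F → ∃ c, ∀ z ∈ D, F z = c

/-- A complex geodesic of `D`: a holomorphic isometry from the Poincaré distance of
the unit disc to the Kobayashi distance of `D`. -/
def IsComplexGeodesic (D : Set E) (φ : ℂ → E) : Prop :=
  DifferentiableOn ℂ φ uDisc ∧ MapsTo φ uDisc D ∧
    ∀ ζ ∈ uDisc, ∀ η ∈ uDisc, kDist D (φ ζ) (φ η) = pDist ζ η

/-- A Lempert projection associated to the complex geodesic `φ`: a holomorphic
retraction of `D` onto `φ(𝔻)` with affine fibers. -/
def IsLempertProjection (D : Set E) (φ : ℂ → E) (ρ : E → E) : Prop :=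
  DifferentiableOn ℂ ρ D ∧ MapsTo ρ D (φ '' uDisc) ∧
    (∀ z ∈ D, ρ (ρ z) = ρ z) ∧ (∀ ζ ∈ uDisc, ρ (φ ζ) = φ ζ) ∧
    ∀ ζ ∈ uDisc, ∃ (L : E →ₗ[ℂ] ℂ) (c : ℂ), L ≠ 0 ∧
      {w ∈ D | ρ w = φ ζ} = {w ∈ D | L w = c}

/-- A Lempert projection device `(φ, ρ, ρ̃)`: a complex geodesic, an associated
Lempert projection, and the left inverse `ρ̃ = φ⁻¹ ∘ ρ`. -/
def IsLempertDevice (D : Set E) (φ : ℂ → E) (ρ : E → E) (ρt : E → ℂ) : Prop :=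
  IsComplexGeodesic D φ ∧ IsLempertProjection D φ ρ ∧
    ∀ z ∈ D, ρt z ∈ uDisc ∧ φ (ρt z) = ρ z

/-- `X` is 1-Bloch in `D`: there is `C > 0` such that for every Lempert projection
device, `ρ̃(X)` is contained in a Bloch subdomain of the disc of Bloch radius `< C`. -/
def OneBloch (D X : Set E) : Prop :=
  ∃ C > (0 : ℝ), ∀ (φ : ℂ → E) (ρ : E → E) (ρt : E → ℂ),
    IsLempertDevice D φ ρ ρt → ∃ U : Set ℂ, IsOpen U ∧ IsConnected U ∧ U ⊆ uDisc ∧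
      ρt '' X ⊆ U ∧ blochRadiusD U < ENNReal.ofReal C

/-- `X` is c-Bloch in `D`: there is `C > 0` such that for every Lempert projection
device, `ρ̃(X ∩ φ(𝔻))` is contained in a Bloch subdomain of Bloch radius `≤ C`. -/
def CBloch (D X : Set E) : Prop :=
  ∃ C > (0 : ℝ), ∀ (φ : ℂ → E) (ρ : E → E) (ρt : E → ℂ),
    IsLempertDevice D φ ρ ρt → ∃ U : Set ℂ, IsOpen U ∧ IsConnected U ∧ U ⊆ uDisc ∧
      ρt '' (X ∩ φ '' uDisc) ⊆ U ∧ blochRadiusD U ≤ ENNReal.ofReal C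

/-!
Since `D ⊆ ball 0 R`, Schwarz's lemma bounds the Euclidean distance by `4R · k_D`, provided any
two points of `D` lie on a common analytic disc (otherwise the infima defining `k_D` would be the
junk value `sInf ∅ = 0`). Such a disc is obtained by joining the points with an entire curve that
stays in `D` along `[0, 1]`, found by a connectedness argument, and precomposing it with a
holomorphic map of the unit disc into a thin neighbourhood of `[0, 1]`. The contraction then gives
`‖F_j z - F_j w‖ ≤ 4R c^(j+1) k_D(z, w) → 0`, so every limit of the `F_j` is constant.
-/

open Topology

def EntireJoinedIn (D : Set E) (z w : E) : Prop :=
  ∃ g : ℂ → E, Differentiable ℂ g ∧ g 0 = z ∧ g 1 = w ∧ MapsTo (fun t : ℝ => g t) (Icc 0 1) D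

/-- The new curve is `g ζ + ζ ^ (M + 1) • (x - w)`: for large `M` it stays close to `g` on
`[0, η]` and close to the segment `[w, x]` on `[η, 1]`, where `g` is already close to `w`. -/
theorem EntireJoinedIn.of_segment_subset {D : Set E} (hD : IsOpen D) {z w x : E}
    (h : EntireJoinedIn D z w) (hseg : segment ℝ w x ⊆ D) : EntireJoinedIn D z x := by
  obtain ⟨g, hg, hg0, hg1, hgD⟩ := h
  have hgc : Continuous fun t : ℝ => g t := hg.continuous.comp Complex.continuous_ofReal
  have hK : IsCompact ((fun t : ℝ => g t) '' Icc 0 1 ∪ segment ℝ w x) := by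
    refine (isCompact_Icc.image hgc).union ?_
    rw [segment_eq_image']
    exact isCompact_Icc.image (by fun_prop)
  obtain ⟨ε, hε, hεD⟩ := hK.exists_thickening_subset_open hD (union_subset hgD.image_subset hseg)
  have hnear : (fun t : ℝ => g t) ⁻¹' ball w ε ∈ 𝓝 (1 : ℝ) := by
    simpa [hg1] using (hgc.continuousAt (x := 1)).preimage_mem_nhds (ball_mem_nhds _ hε)
  obtain ⟨η, ⟨hη0, hη1⟩, hηnear⟩ := exists_Ioc_subset_of_mem_nhds' hnear zero_lt_one
  obtain ⟨M, hM⟩ := exists_pow_lt_of_lt_one (div_pos hε (by positivity : 0 < ‖x - w‖ + 1)) hη1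
  refine ⟨fun ζ => g ζ + ζ ^ (M + 1) • (x - w), hg.add ((differentiable_id.pow _).smul_const _),
    by simp [hg0], by simp [hg1], fun t ht => hεD ?_⟩
  have hsmul : ((t : ℂ) ^ (M + 1)) • (x - w) = (t ^ (M + 1)) • (x - w) := by
    rw [← Complex.ofReal_pow, Complex.coe_smul]
  simp only [hsmul]
  rw [mem_thickening_iff]
  rcases le_or_gt t η with htη | htη
  · refine ⟨g t, Or.inl ⟨t, ht, rfl⟩, ?_⟩
    have hpow : t ^ (M + 1) ≤ η ^ M :=
      (pow_le_pow_of_le_one ht.1 ht.2 M.le_succ).trans (pow_le_pow_left₀ ht.1 htη M)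
    calc dist (g t + t ^ (M + 1) • (x - w)) (g t) = t ^ (M + 1) * ‖x - w‖ := by
          rw [dist_self_add_left, norm_smul, Real.norm_of_nonneg (by positivity [ht.1])]
      _ ≤ η ^ M * (‖x - w‖ + 1) := by gcongr; linarith
      _ < ε := (lt_div_iff₀ (by positivity)).mp hM
  · refine ⟨w + t ^ (M + 1) • (x - w), Or.inr ?_, ?_⟩
    · rw [segment_eq_image']
      exact ⟨_, ⟨by positivity [ht.1], pow_le_one₀ ht.1 ht.2⟩, rfl⟩
    · rw [dist_add_right]
      exact hηnear ⟨htη, ht.2⟩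

theorem IsPreconnected.entireJoinedIn {D : Set E} (hDo : IsOpen D) (hDc : IsPreconnected D)
    {z w : E} (hz : z ∈ D) (hw : w ∈ D) : EntireJoinedIn D z w := by
  have hball : ∀ x ∈ D, ∃ r > 0, ∀ y ∈ ball x r, segment ℝ x y ⊆ D ∧ segment ℝ y x ⊆ D := by
    intro x hx
    obtain ⟨r, hr, hrD⟩ := Metric.isOpen_iff.mp hDo x hx
    exact ⟨r, hr, fun y hy => ⟨((convex_ball x r).segment_subset (mem_ball_self hr) hy).trans hrD,
      ((convex_ball x r).segment_subset hy (mem_ball_self hr)).trans hrD⟩⟩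
  have hopen : IsOpen {x | EntireJoinedIn D z x} := by
    refine Metric.isOpen_iff.mpr fun x hx => ?_
    obtain ⟨g, -, -, hg1, hgD⟩ := id hx
    obtain ⟨r, hr, hseg⟩ := hball x (by simpa [hg1] using hgD ⟨zero_le_one, le_rfl⟩)
    exact ⟨r, hr, fun y hy => hx.of_segment_subset hDo (hseg y hy).1⟩
  refine hDc.subset_of_closure_inter_subset hopen
    ⟨z, hz, fun _ => z, differentiable_const z, rfl, rfl, fun _ _ => hz⟩ ?_ hw
  rintro x ⟨hxcl, hx⟩
  obtain ⟨r, hr, hseg⟩ := hball x hx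
  obtain ⟨y, hy, hyx⟩ := Metric.mem_closure_iff.mp hxcl r hr
  exact hy.of_segment_subset hDo (hseg y (mem_ball'.mpr hyx)).2

theorem mem_uDisc {ζ : ℂ} : ζ ∈ uDisc ↔ ‖ζ‖ < 1 := mem_ball_zero_iff

theorem one_sub_ne_zero_of_mem_uDisc {ζ : ℂ} (hζ : ζ ∈ uDisc) : 1 - ζ ≠ 0 := by
  intro h
  rw [mem_uDisc, ← sub_eq_zero.mp h, norm_one] at hζ
  exact lt_irrefl 1 hζ

theorem re_one_add_div_one_sub_pos {ζ : ℂ} (hζ : ζ ∈ uDisc) : 0 < ((1 + ζ) / (1 - ζ)).re := by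
  have hsq : ζ.re * ζ.re + ζ.im * ζ.im < 1 := by
    rw [← Complex.normSq_apply, ← Complex.sq_norm]
    nlinarith [mem_uDisc.mp hζ, norm_nonneg ζ]
  rw [Complex.div_re, ← add_div]
  apply div_pos _ (Complex.normSq_pos.mpr (one_sub_ne_zero_of_mem_uDisc hζ))
  simp only [Complex.add_re, Complex.add_im, Complex.sub_re, Complex.sub_im,
    Complex.one_re, Complex.one_im]
  nlinarith

/-- `cayleyLog = 2 artanh` maps the unit disc onto the strip `|Im w| < π / 2`. -/
def cayleyLog (ζ : ℂ) : ℂ := Complex.log ((1 + ζ) / (1 - ζ))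

theorem cayleyLog_zero : cayleyLog 0 = 0 := by simp [cayleyLog]

theorem cayleyLog_tanh (y : ℝ) : cayleyLog (Real.tanh y) = 2 * y := by
  have hpos : 0 < (1 + Real.tanh y) / (1 - Real.tanh y) :=
    div_pos (by linarith [Real.neg_one_lt_tanh y]) (by linarith [Real.tanh_lt_one y])
  have hlog : Real.log ((1 + Real.tanh y) / (1 - Real.tanh y)) = 2 * y := by
    have := Real.artanh_eq_half_log ⟨(Real.neg_one_lt_tanh y).le, (Real.tanh_lt_one y).le⟩
    rw [Real.artanh_tanh] at this
    linarith
  rw [cayleyLog, ← Complex.ofReal_one, ← Complex.ofReal_add, ← Complex.ofReal_sub,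
    ← Complex.ofReal_div, ← Complex.ofReal_log hpos.le, hlog]
  push_cast
  ring

theorem differentiableOn_cayleyLog : DifferentiableOn ℂ cayleyLog uDisc := fun _ hζ =>
  (((differentiableAt_const _).add differentiableAt_id).div
    ((differentiableAt_const _).sub differentiableAt_id) (one_sub_ne_zero_of_mem_uDisc hζ)).clog
    (Complex.mem_slitPlane_iff.mpr (Or.inl (re_one_add_div_one_sub_pos hζ)))
    |>.differentiableWithinAt

theorem abs_im_cayleyLog_lt {ζ : ℂ} (hζ : ζ ∈ uDisc) : |(cayleyLog ζ).im| < Real.pi / 2 := by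
  rw [cayleyLog, Complex.log_im]
  exact Complex.abs_arg_lt_pi_div_two_iff.mpr (Or.inl (re_one_add_div_one_sub_pos hζ))

theorem norm_cos_add_mul_I_sub_cos_le (x y : ℝ) :
    ‖Complex.cos (x + y * Complex.I) - Complex.cos x‖ ≤ Real.exp |y| - 1 := by
  have hcos : Complex.cos (x + y * Complex.I) - Complex.cos x =
      ((Real.cos x * (Real.cosh y - 1) : ℝ) : ℂ) -
        ((Real.sin x * Real.sinh y : ℝ) : ℂ) * Complex.I := by
    rw [Complex.cos_add_mul_I, ← Complex.ofReal_cos, ← Complex.ofReal_sin, ← Complex.ofReal_cosh,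
      ← Complex.ofReal_sinh]
    push_cast
    ring
  have hcosh : 0 ≤ Real.cosh y - 1 := by linarith [Real.one_le_cosh y]
  have hre : |Real.cos x * (Real.cosh y - 1)| ≤ Real.cosh |y| - 1 := by
    rw [abs_mul, abs_of_nonneg hcosh, Real.cosh_abs]
    exact mul_le_of_le_one_left hcosh (Real.abs_cos_le_one x)
  have him : |Real.sin x * Real.sinh y| ≤ Real.sinh |y| := by
    rw [abs_mul, Real.abs_sinh]
    exact mul_le_of_le_one_left (Real.sinh_nonneg_iff.mpr (abs_nonneg y)) (Real.abs_sin_le_one x)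
  calc ‖Complex.cos (x + y * Complex.I) - Complex.cos x‖
      ≤ |Real.cos x * (Real.cosh y - 1)| + |Real.sin x * Real.sinh y| := by
        rw [hcos]
        refine (norm_sub_le _ _).trans_eq ?_
        rw [norm_mul, Complex.norm_I, mul_one, Complex.norm_real, Complex.norm_real,
          Real.norm_eq_abs, Real.norm_eq_abs]
    _ ≤ Real.exp |y| - 1 := by
        rw [← Real.cosh_add_sinh]
        linarith

/-- `h = (1 - cos (k · cayleyLog)) / 2` folds the thin strip `k · cayleyLog (uDisc)` onto a
thin neighbourhood of `[0, 1]`; the point `tanh (π / 2k)` is sent to `1`. -/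
theorem exists_disc_near_unitInterval {ε : ℝ} (hε : 0 < ε) :
    ∃ (h : ℂ → ℂ) (ζ₀ : ℂ), DifferentiableOn ℂ h uDisc ∧
      MapsTo h uDisc (thickening ε (((↑) : ℝ → ℂ) '' Icc 0 1)) ∧
      h 0 = 0 ∧ ζ₀ ∈ uDisc ∧ h ζ₀ = 1 := by
  set δ := Real.log (1 + ε)
  have hδ : 0 < δ := Real.log_pos (by linarith)
  set k := 2 * δ / Real.pi
  have hk : 0 < k := by positivity
  set h : ℂ → ℂ := fun ζ => (1 - Complex.cos (k * cayleyLog ζ)) / 2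
  refine ⟨h, Real.tanh (Real.pi / (2 * k)), ?_, fun ζ hζ => ?_, ?_, ?_, ?_⟩
  · exact ((differentiableOn_cayleyLog.const_mul _).ccos.const_sub _).div_const _
  · set w := (k : ℂ) * cayleyLog ζ
    have hw : |w.im| < δ := by
      rw [Complex.im_ofReal_mul, abs_mul, abs_of_pos hk]
      calc k * |(cayleyLog ζ).im| < k * (Real.pi / 2) :=
            mul_lt_mul_of_pos_left (abs_im_cayleyLog_lt hζ) hk
        _ = δ := by simp only [k]; field_simp
    have hcos := norm_cos_add_mul_I_sub_cos_le w.re w.im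
    rw [Complex.re_add_im] at hcos
    refine mem_thickening_iff.mpr ⟨((1 - Real.cos w.re) / 2 : ℝ), ⟨_, ⟨?_, ?_⟩, rfl⟩, ?_⟩
    · linarith [Real.cos_le_one w.re]
    · linarith [Real.neg_one_le_cos w.re]
    · have hexp : Real.exp |w.im| ≤ 1 + ε := by
        rw [← Real.exp_log (by linarith : 0 < 1 + ε)]
        exact Real.exp_le_exp.mpr hw.le
      calc dist (h ζ) ((1 - Real.cos w.re) / 2 : ℝ)
          = ‖Complex.cos w - Complex.cos w.re‖ / 2 := by
            have : h ζ - ((1 - Real.cos w.re) / 2 : ℝ) =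
                -(Complex.cos w - Complex.cos w.re) / 2 := by
              push_cast [h, w]
              ring
            rw [Complex.dist_eq, this, norm_div, norm_neg, Complex.norm_two]
        _ < ε := by linarith
  · simp [h, cayleyLog_zero]
  · rw [mem_uDisc, Complex.norm_real, Real.norm_eq_abs, abs_lt]
    exact ⟨Real.neg_one_lt_tanh _, Real.tanh_lt_one _⟩
  · have hπ : (k : ℂ) * cayleyLog (Real.tanh (Real.pi / (2 * k))) = Real.pi := by
      have hk' : (k : ℂ) ≠ 0 := by exact_mod_cast hk.ne'
      rw [cayleyLog_tanh]
      push_cast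
      field_simp
    simp only [h, hπ, Complex.cos_pi]
    norm_num

theorem lemSet_nonempty {D : Set E} (hDo : IsOpen D) (hDc : IsPreconnected D) {z w : E}
    (hz : z ∈ D) (hw : w ∈ D) : (lemSet D z w).Nonempty := by
  obtain ⟨g, hg, hg0, hg1, hgD⟩ := hDc.entireJoinedIn hDo hz hw
  have hI : IsCompact (((↑) : ℝ → ℂ) '' Icc 0 1) :=
    isCompact_Icc.image Complex.continuous_ofReal
  obtain ⟨ε, hε, hεD⟩ := hI.exists_thickening_subset_open (hDo.preimage hg.continuous)
    (image_subset_iff.mpr hgD)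
  obtain ⟨h, ζ₀, hh, hhI, h0, hζ₀, h1⟩ := exists_disc_near_unitInterval hε
  exact ⟨_, g ∘ h, ζ₀, hg.comp_differentiableOn hh, fun ζ hζ => hεD (hhI hζ),
    by simp [h0, hg0], hζ₀, by simp [h1, hg1], rfl⟩

theorem le_two_mul_artanh {x : ℝ} (hx0 : 0 ≤ x) (hx1 : x < 1) : x ≤ 2 * artanh x := by
  have hlog : Real.log (1 - x) ≤ -x := by
    linarith [Real.log_le_sub_one_of_pos (show 0 < 1 - x by linarith)]
  rw [artanh, Real.log_div (by linarith) (by linarith)]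
  linarith [Real.log_nonneg (show 1 ≤ 1 + x by linarith)]

theorem pDist_zero_left (ζ : ℂ) : pDist 0 ζ = artanh ‖ζ‖ := by simp [pDist]

/-- Schwarz's lemma, combined with `‖ζ‖ ≤ 2 artanh ‖ζ‖`. -/
theorem dist_le_mul_of_mem_lemSet {D : Set E} {R : ℝ} (hRD : D ⊆ ball 0 R) {z w : E} {x : ℝ}
    (hx : x ∈ lemSet D z w) : dist z w ≤ 4 * R * x := by
  obtain ⟨f, ζ, hfd, hfD, rfl, hζ, rfl, rfl⟩ := hx
  have hf : ∀ ξ ∈ uDisc, ‖f ξ‖ < R := fun ξ hξ => mem_ball_zero_iff.mp (hRD (hfD hξ))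
  have h0 : (0 : ℂ) ∈ uDisc := mem_uDisc.mpr (by simp)
  have hR : 0 ≤ R := (norm_nonneg _).trans (hf 0 h0).le
  have hmaps : MapsTo f (ball 0 1) (closedBall (f 0) (2 * R)) := fun ξ hξ => by
    rw [mem_closedBall, dist_eq_norm]
    linarith [norm_sub_le (f ξ) (f 0), hf ξ hξ, hf 0 h0]
  have hschwarz := Complex.dist_le_div_mul_dist_of_mapsTo_ball hfd hmaps hζ
  rw [div_one, dist_zero_right] at hschwarz
  rw [dist_comm, pDist_zero_left]
  calc dist (f ζ) (f 0) ≤ 2 * R * ‖ζ‖ := hschwarz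
    _ ≤ 2 * R * (2 * artanh ‖ζ‖) :=
        mul_le_mul_of_nonneg_left (le_two_mul_artanh (norm_nonneg ζ) (mem_uDisc.mp hζ))
          (by positivity)
    _ = 4 * R * artanh ‖ζ‖ := by ring

theorem dist_le_mul_kDist {D : Set E} (hDo : IsOpen D) (hDc : IsPreconnected D) {R : ℝ}
    (hRD : D ⊆ ball 0 R) {z w : E} (hz : z ∈ D) (hw : w ∈ D) :
    dist z w ≤ 4 * R * kDist D z w := by
  have hR : 0 < R := (norm_nonneg z).trans_lt (mem_ball_zero_iff.mp (hRD hz))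
  rw [← div_le_iff₀' (by positivity), kDist]
  refine le_csInf ⟨_, 1, fun i => if i = 0 then z else w, rfl, rfl,
    fun i _ => by dsimp only; split_ifs <;> assumption, rfl⟩ ?_
  rintro _ ⟨m, p, rfl, rfl, hpD, rfl⟩
  calc dist (p 0) (p m) / (4 * R) ≤ (∑ i ∈ Finset.range m, dist (p i) (p (i + 1))) / (4 * R) :=
        div_le_div_of_nonneg_right (dist_le_range_sum_dist p m) (by positivity)
    _ ≤ ∑ i ∈ Finset.range m, sInf (lemSet D (p i) (p (i + 1))) := by
        rw [Finset.sum_div]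
        refine Finset.sum_le_sum fun i hi => ?_
        have hi := Finset.mem_range.mp hi
        refine le_csInf (lemSet_nonempty hDo hDc (hpD i hi.le) (hpD (i + 1) hi)) fun x hx => ?_
        rw [div_le_iff₀' (by positivity)]
        exact dist_le_mul_of_mem_lemSet hRD hx

section IteratedFunctionSystem

variable {X : Type*} {D : Set X} {f : ℕ → X → X}

theorem mapsTo_comps (hf : ∀ j, MapsTo (f j) D D) (n : ℕ) : MapsTo (comps f n) D D := by
  induction n with
  | zero => exact hf 0
  | succ n ih => exact (hf (n + 1)).comp ih

theorem comps_contracting (hf : ∀ j, MapsTo (f j) D D) {d : X → X → ℝ} {c : ℝ} (hc : 0 ≤ c)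
    (hcontr : ∀ j, ∀ z ∈ D, ∀ w ∈ D, d (f j z) (f j w) ≤ c * d z w) (n : ℕ) :
    ∀ z ∈ D, ∀ w ∈ D, d (comps f n z) (comps f n w) ≤ c ^ (n + 1) * d z w := by
  induction n with
  | zero => simpa [comps] using hcontr 0
  | succ n ih =>
    intro z hz w hw
    calc d (comps f (n + 1) z) (comps f (n + 1) w)
        ≤ c * d (comps f n z) (comps f n w) :=
          hcontr (n + 1) _ (mapsTo_comps hf n hz) _ (mapsTo_comps hf n hw)
      _ ≤ c * (c ^ (n + 1) * d z w) := mul_le_mul_of_nonneg_left (ih z hz w hw) hc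
      _ = c ^ (n + 1 + 1) * d z w := by ring

theorem IFSLimit.exists_eq_const_of_contracting [NormedAddCommGroup X] {F : X → X}
    (hF : IFSLimit D f F) (hf : ∀ j, MapsTo (f j) D D) {d : X → X → ℝ}
    (hd : ∀ z ∈ D, ∀ w ∈ D, dist z w ≤ d z w) {c : ℝ} (hc : c < 1)
    (hcontr : ∀ j, ∀ z ∈ D, ∀ w ∈ D, d (f j z) (f j w) ≤ c * d z w) :
    ∃ p, ∀ z ∈ D, F z = p := by
  obtain ⟨s, hs, hlim⟩ := hF
  have hcontr' : ∀ j, ∀ z ∈ D, ∀ w ∈ D, d (f j z) (f j w) ≤ max c 0 * d z w :=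
    fun j z hz w hw => (hcontr j z hz w hw).trans <| mul_le_mul_of_nonneg_right (le_max_left _ _)
      (dist_nonneg.trans (hd z hz w hw))
  have hconst : ∀ z ∈ D, ∀ w ∈ D, F z = F w := by
    intro z hz w hw
    have hpow : Tendsto (fun j => max c 0 ^ (s j + 1) * d z w) atTop (𝓝 0) := by
      have hc' := tendsto_pow_atTop_nhds_zero_of_lt_one (le_max_right c 0) (max_lt hc one_pos)
      simpa using (hc'.comp ((tendsto_add_atTop_nat 1).comp hs.tendsto_atTop)).mul_const (d z w)
    have hbound : ∀ j, dist (comps f (s j) z) (comps f (s j) w) ≤ max c 0 ^ (s j + 1) * d z w :=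
      fun j => (hd _ (mapsTo_comps hf _ hz) _ (mapsTo_comps hf _ hw)).trans
        (comps_contracting hf (le_max_right c 0) hcontr' _ z hz w hw)
    exact dist_le_zero.mp <| le_of_tendsto_of_tendsto'
      ((hlim.tendsto_at hz).dist (hlim.tendsto_at hw)) hpow hbound
  rcases D.eq_empty_or_nonempty with rfl | ⟨z₀, hz₀⟩
  · exact ⟨0, fun _ h => h.elim⟩
  · exact ⟨F z₀, fun z hz => hconst z hz z₀ hz₀⟩

end IteratedFunctionSystem

/-- contraction mapping principle: uniform Kobayashi contractions
have only constant IFS limits. -/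
theorem stmt13 {n : ℕ} (D : Set (EuclideanSpace ℂ (Fin n)))
    (hDo : IsOpen D) (hDc : IsConnected D) (hDb : Bornology.IsBounded D)
    (f : ℕ → EuclideanSpace ℂ (Fin n) → EuclideanSpace ℂ (Fin n))
    (hf : ∀ j, DifferentiableOn ℂ (f j) D ∧ MapsTo (f j) D D)
    (c : ℝ) (hc : c < 1)
    (hcontr : ∀ j, ∀ z ∈ D, ∀ w ∈ D, kDist D (f j z) (f j w) ≤ c * kDist D z w)
    (F : EuclideanSpace ℂ (Fin n) → EuclideanSpace ℂ (Fin n))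
    (hF : IFSLimit D f F) :
    ∃ p, ∀ z ∈ D, F z = p := by
  obtain ⟨R, hR, hRD⟩ := hDb.subset_ball_lt 0 0
  refine hF.exists_eq_const_of_contracting (fun j => (hf j).2) (d := fun z w => 4 * R * kDist D z w)
    (fun z hz w hw => dist_le_mul_kDist hDo hDc.isPreconnected hRD hz hw) hc
    fun j z hz w hw => ?_
  calc 4 * R * kDist D (f j z) (f j w) ≤ 4 * R * (c * kDist D z w) := by
        gcongr
        exact hcontr j z hz w hw
    _ = c * (4 * R * kDist D z w) := by ring
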